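/- Let R be a noetherian F-finite normal integral domain of prime characteristic p and let 𝔭 ⊆ R be a prime ideal of height 1. If R is purely F-regular along 𝔭, then both R and the quotient domain R/𝔭 are strongly F-regular. -/

import Mathlib

/-- `φ` is a `p^e`-linear map: an additive map with `φ (a^(p^e) * b) = a * φ b`. -/
def IsPLinearMap (p e : ℕ) {R : Type*} [CommRing R] (φ : R →+ R) : Prop :=
  ∀ a b : R, φ (a ^ p ^ e * b) = a * φ b

/-- `R` is purely `F`-regular along the ideal `q`: for every `c ∉ q` there are `e ≥ 1` and a
`p^e`-linear map `φ` with `φ q ⊆ q` and `φ c = 1`. -/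
def PurelyFRegularAlong (p : ℕ) {R : Type*} [CommRing R] (q : Ideal R) : Prop :=
  ∀ c : R, c ∉ q → ∃ e : ℕ, 1 ≤ e ∧ ∃ φ : R →+ R,
    IsPLinearMap p e φ ∧ (∀ x ∈ q, φ x ∈ q) ∧ φ c = 1

/-- `R` is F-finite: `R` is a finitely generated module over its subring of `p`-th powers,
i.e. there is a finite set spanning `R` with coefficients that are `p`-th powers. -/
def FFinite (p : ℕ) (R : Type*) [CommRing R] : Prop :=
  ∃ s : Finset R, ∀ x : R, ∃ c : R → R, x = ∑ y ∈ s, (c y) ^ p * y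

/-- A prime ideal of height one: a nonzero prime admitting no prime strictly between it and
the zero ideal. -/
def IsHeightOnePrime {R : Type*} [CommRing R] (𝔭 : Ideal R) : Prop :=
  𝔭.IsPrime ∧ 𝔭 ≠ ⊥ ∧ ∀ q : Ideal R, q.IsPrime → q < 𝔭 → q = ⊥

/-- A ring of characteristic `p` is strongly F-regular if every nonzero element is sent
to `1` by some `p^e`-linear map. -/
def StronglyFRegular (p : ℕ) (R : Type*) [CommRing R] : Prop :=
  ∀ c : R, c ≠ 0 → ∃ e : ℕ, 1 ≤ e ∧ ∃ φ : R →+ R, IsPLinearMap p e φ ∧ φ c = 1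

/-!
Localized at `𝔭`, the ring `R` becomes a noetherian normal local domain whose only nonzero prime
is maximal, hence a principal ideal ring, so `F^e_* R_𝔭` is free. By Krull's intersection theorem
a nonzero `c` lies outside `𝔪 ^ p ^ e` for large `e`, so one of its coordinates in a basis of
`F^e_* R_𝔭` is a unit, and the corresponding coordinate functional is a `p^e`-linear map sending
`c` to `1`. Clearing denominators gives a `p^e`-linear map `ψ` on `R` with `ψ c ∉ 𝔭`; composing
with a map `φ` from pure F-regularity along `𝔭` with `φ (ψ c) = 1` handles `R`. Maps `φ` with
`φ 𝔭 ⊆ 𝔭` descend to `R ⧸ 𝔭`, which handles the quotient.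
-/

open IsLocalRing

variable {p : ℕ}

namespace IsPLinearMap

variable {R : Type*} [CommRing R] {e e' : ℕ} {φ ψ : R →+ R}

theorem comp (hφ : IsPLinearMap p e φ) (hψ : IsPLinearMap p e' ψ) :
    IsPLinearMap p (e + e') (φ.comp ψ) := fun a b => by
  rw [AddMonoidHom.comp_apply, pow_add, pow_mul, hψ, hφ, AddMonoidHom.comp_apply]

theorem exists_quotient (hφ : IsPLinearMap p e φ) {I : Ideal R} (hI : ∀ x ∈ I, φ x ∈ I) :
    ∃ φ' : R ⧸ I →+ R ⧸ I, IsPLinearMap p e φ' ∧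
      ∀ x, φ' (Ideal.Quotient.mk I x) = Ideal.Quotient.mk I (φ x) := by
  refine ⟨QuotientAddGroup.map _ _ φ hI, ?_, fun _ => rfl⟩
  rintro ⟨a⟩ ⟨b⟩
  exact congrArg (Ideal.Quotient.mk I) (hφ a b)

end IsPLinearMap

section FFinite

variable {R : Type*} [CommRing R] {e : ℕ}

theorem FFinite.of_fintype [ExpChar R p] {ι : Type*} [Fintype ι] (g : ι → R)
    (h : ∀ x, ∃ d : ι → R, x = ∑ i, d i ^ p ^ e * g i) : FFinite (p ^ e) R := by
  classical
  refine ⟨Finset.univ.image g, fun x => ?_⟩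
  obtain ⟨d, rfl⟩ := h x
  refine ⟨fun y => ∑ i ∈ Finset.univ.filter (g · = y), d i, ?_⟩
  rw [← Finset.sum_fiberwise_of_maps_to fun i _ => Finset.mem_image_of_mem g (Finset.mem_univ i)]
  refine Finset.sum_congr rfl fun y _ => ?_
  rw [sum_pow_char_pow, Finset.sum_mul]
  exact Finset.sum_congr rfl fun i hi => by rw [(Finset.mem_filter.mp hi).2]

theorem FFinite.pow [ExpChar R p] (hff : FFinite p R) (e : ℕ) : FFinite (p ^ e) R := by
  induction e with
  | zero => exact ⟨{1}, fun x => ⟨fun _ => x, by simp⟩⟩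
  | succ e ih =>
    obtain ⟨s, hs⟩ := hff
    obtain ⟨t, ht⟩ := ih
    refine FFinite.of_fintype (ι := s × t) (fun yz => yz.2.1 ^ p * yz.1) fun x => ?_
    obtain ⟨a, ha⟩ := hs x
    choose b hb using fun y => ht (a y)
    refine ⟨fun yz => b yz.1 yz.2, ?_⟩
    rw [ha, ← Finset.sum_coe_sort s, Fintype.sum_prod_type]
    refine Finset.sum_congr rfl fun y _ => ?_
    rw [hb y, sum_pow_char, Finset.sum_mul, ← Finset.sum_coe_sort t]
    refine Finset.sum_congr rfl fun z _ => ?_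
    ring

theorem FFinite.isLocalization {S : Type*} [CommRing S] [Algebra R S] [ExpChar S p]
    (M : Submonoid R) [IsLocalization M S] (hff : FFinite (p ^ e) R) : FFinite (p ^ e) S := by
  obtain ⟨s, hs⟩ := hff
  refine FFinite.of_fintype (fun y : s => algebraMap R S y) fun z => ?_
  obtain ⟨⟨x, u⟩, rfl⟩ := IsLocalization.mk'_surjective M z
  set v := IsLocalization.mk' S (1 : R) u
  have hv : algebraMap R S u * v = 1 := (IsLocalization.mk'_spec' S 1 u).trans (map_one _)
  obtain ⟨c, hc⟩ := hs (x * (u : R) ^ (p ^ e - 1))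
  refine ⟨fun y => algebraMap R S (c y) * v, ?_⟩
  have hz : IsLocalization.mk' S x u = algebraMap R S (x * (u : R) ^ (p ^ e - 1)) * v ^ p ^ e := by
    obtain ⟨n, hn⟩ := Nat.exists_eq_add_one_of_ne_zero (expChar_pow_pos S p e).ne'
    rw [IsLocalization.mk'_eq_mul_mk'_one, hn, Nat.add_sub_cancel, map_mul, map_pow, pow_succ,
      ← mul_assoc, mul_assoc (algebraMap R S x), ← mul_pow, hv, one_pow, mul_one]
  simp_rw [hz, hc, map_sum, Finset.sum_mul, ← Finset.sum_coe_sort s, map_mul, map_pow]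
  exact Fintype.sum_congr _ _ fun y => by ring

end FFinite

-- A type synonym, so that `A` can carry the `A`-module structure of `F^e_* A`.
def FrobeniusPushforward (A : Type*) (_p _e : ℕ) : Type _ := A

namespace FrobeniusPushforward

variable {A : Type*} [CommRing A] {e : ℕ}

instance : AddCommGroup (FrobeniusPushforward A p e) := inferInstanceAs (AddCommGroup A)

def of : A ≃+ FrobeniusPushforward A p e := AddEquiv.refl A

variable [ExpChar A p]

noncomputable instance : Module A (FrobeniusPushforward A p e) :=
  Module.compHom A (iterateFrobenius A p e)

theorem of_symm_smul (a : A) (x : FrobeniusPushforward A p e) :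
    of.symm (a • x) = a ^ p ^ e * of.symm x := rfl

instance : Module.IsTorsionFree A (FrobeniusPushforward A p e) where
  isSMulRegular _ hr _ _ hxy := of.symm.injective <| (hr.pow (p ^ e)).left <| by
    simpa only [of_symm_smul] using congrArg of.symm hxy

theorem isPLinearMap_comp_of (l : FrobeniusPushforward A p e →ₗ[A] A) :
    IsPLinearMap p e (l.toAddMonoidHom.comp (of : A ≃+ _).toAddMonoidHom) := fun a b =>
  l.map_smul a (of b)

theorem finite_of_fFinite (hff : FFinite (p ^ e) A) :
    Module.Finite A (FrobeniusPushforward A p e) := by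
  classical
  obtain ⟨s, hs⟩ := hff
  refine ⟨⟨s.image of, eq_top_iff.mpr fun x _ => ?_⟩⟩
  obtain ⟨c, hc⟩ := hs (of.symm x)
  rw [← of.apply_symm_apply x, hc, map_sum]
  exact Submodule.sum_mem _ fun y hy =>
    Submodule.smul_mem _ (c y) (Submodule.subset_span (Finset.mem_image_of_mem _ hy))

end FrobeniusPushforward

open FrobeniusPushforward

theorem exists_isPLinearMap_eq_one_of_basis {A : Type*} [CommRing A] [IsLocalRing A]
    [ExpChar A p] {e : ℕ} {ι : Type*} [Fintype ι]
    (b : Module.Basis ι A (FrobeniusPushforward A p e)) {c : A} (hc : c ∉ maximalIdeal A ^ p ^ e) :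
    ∃ φ : A →+ A, IsPLinearMap p e φ ∧ φ c = 1 := by
  obtain ⟨i, hi⟩ : ∃ i, b.repr (of c) i ∉ maximalIdeal A := by
    by_contra! h
    refine hc ?_
    rw [← of.symm_apply_apply c, ← b.sum_repr (of c), map_sum]
    exact Ideal.sum_mem _ fun i _ => by
      rw [of_symm_smul]
      exact Ideal.mul_mem_right _ _ (Ideal.pow_mem_pow (h i) _)
  have hu : IsUnit (b.repr (of c) i) := notMem_maximalIdeal.mp hi
  refine ⟨_, isPLinearMap_comp_of ((hu.unit⁻¹ : Aˣ) • b.coord i), ?_⟩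
  simp [Units.smul_def]

theorem stronglyFRegular_of_isPrincipalIdealRing {A : Type*} [CommRing A] [IsDomain A]
    [IsLocalRing A] [IsPrincipalIdealRing A] [CharP A p] (hp : p.Prime) (hff : FFinite p A) :
    StronglyFRegular p A := by
  have : Fact p.Prime := ⟨hp⟩
  intro c hc
  obtain ⟨N, hN⟩ : ∃ N, c ∉ maximalIdeal A ^ N := by
    by_contra! h
    have := (Submodule.mem_iInf _).mpr h
    rw [Ideal.iInf_pow_eq_bot_of_isLocalRing _ (maximalIdeal.isMaximal A).ne_top] at this
    exact hc this
  have hNp : N ≤ p ^ (N + 1) := (Nat.lt_pow_self (n := N + 1) hp.one_lt).le.trans' N.le_succ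
  have hc' : c ∉ maximalIdeal A ^ p ^ (N + 1) := fun h => hN (Ideal.pow_le_pow_right hNp h)
  have := finite_of_fFinite (hff.pow (N + 1))
  obtain ⟨φ, hφ, hφc⟩ := exists_isPLinearMap_eq_one_of_basis
    (Module.Free.chooseBasis A (FrobeniusPushforward A p (N + 1))) hc'
  exact ⟨N + 1, N.succ_pos, φ, hφ, hφc⟩

theorem exists_isPLinearMap_algebraMap_eq {R S : Type*} [CommRing R] [CommRing S] [Algebra R S]
    {M : Submonoid R} (hM : M ≤ nonZeroDivisors R) [IsLocalization M S] {e : ℕ}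
    (hff : FFinite (p ^ e) R) {Φ : S →+ S} (hΦ : IsPLinearMap p e Φ) :
    ∃ u ∈ M, ∃ ψ : R →+ R, IsPLinearMap p e ψ ∧
      ∀ x, algebraMap R S (ψ x) = algebraMap R S u * Φ (algebraMap R S x) := by
  classical
  unfold IsPLinearMap at hΦ
  obtain ⟨s, hs⟩ := hff
  obtain ⟨u, hu⟩ := IsLocalization.exist_integer_multiples_of_finset M
    (s.image fun y => Φ (algebraMap R S y))
  have hint : ∀ x, IsLocalization.IsInteger R (algebraMap R S u * Φ (algebraMap R S x)) := by
    intro x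
    obtain ⟨c, rfl⟩ := hs x
    simp only [map_sum, map_mul, map_pow, hΦ, Finset.mul_sum, mul_left_comm (algebraMap R S u)]
    refine Subsemiring.sum_mem _ fun y hy => Subsemiring.mul_mem _ ⟨c y, rfl⟩ ?_
    have := hu _ (Finset.mem_image_of_mem _ hy)
    rwa [Algebra.smul_def] at this
  choose ψ hψ using hint
  have hinj : Function.Injective (algebraMap R S) := IsLocalization.injective S hM
  refine ⟨u, u.2, AddMonoidHom.mk' ψ fun x y => hinj ?_, fun a x => hinj ?_, hψ⟩
  · simp only [map_add, hψ, mul_add]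
  · simp only [AddMonoidHom.mk'_apply, map_mul, map_pow, hψ, hΦ]
    ring

theorem isPrincipalIdealRing_localization_atPrime {R : Type*} [CommRing R] [IsDomain R]
    [IsNoetherianRing R] [IsIntegrallyClosed R] (𝔭 : Ideal R) [𝔭.IsPrime]
    (h𝔭 : ∀ q : Ideal R, q.IsPrime → q < 𝔭 → q = ⊥) :
    IsPrincipalIdealRing (Localization.AtPrime 𝔭) := by
  have : IsIntegrallyClosed (Localization.AtPrime 𝔭) :=
    isIntegrallyClosed_of_isLocalization _ 𝔭.primeCompl 𝔭.primeCompl_le_nonZeroDivisors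
  have tfae := (tfae_of_isNoetherianRing_of_isLocalRing_of_isDomain
    (Localization.AtPrime 𝔭)).out 3 0
  refine tfae.mp ⟨this, fun P hP hPprime =>
    Localization.AtPrime.eq_maximalIdeal_iff_under_eq.mp ?_⟩
  have hle : P.under R ≤ 𝔭 :=
    (Ideal.comap_mono (le_maximalIdeal hPprime.ne_top)).trans_eq
      Localization.AtPrime.under_maximalIdeal
  refine hle.eq_or_lt.resolve_right fun hlt => hP ?_
  rw [← IsLocalization.map_under 𝔭.primeCompl _ P, h𝔭 _ (hPprime.under R) hlt, Ideal.map_bot]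

theorem exists_isPLinearMap_apply_notMem {R : Type*} [CommRing R] [IsDomain R]
    [IsNoetherianRing R] [IsIntegrallyClosed R] [CharP R p] (hp : p.Prime) (hff : FFinite p R)
    (𝔭 : Ideal R) [𝔭.IsPrime] (h𝔭 : ∀ q : Ideal R, q.IsPrime → q < 𝔭 → q = ⊥)
    {c : R} (hc : c ≠ 0) : ∃ e, ∃ ψ : R →+ R, IsPLinearMap p e ψ ∧ ψ c ∉ 𝔭 := by
  have : Fact p.Prime := ⟨hp⟩
  set A := Localization.AtPrime 𝔭
  have hinj : Function.Injective (algebraMap R A) :=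
    IsLocalization.injective A 𝔭.primeCompl_le_nonZeroDivisors
  have : CharP A p := charP_of_injective_algebraMap hinj p
  have := isPrincipalIdealRing_localization_atPrime 𝔭 h𝔭
  obtain ⟨e, -, Φ, hΦ, hΦc⟩ := stronglyFRegular_of_isPrincipalIdealRing hp
    (by simpa using (hff.pow 1).isLocalization 𝔭.primeCompl) (algebraMap R A c)
    ((map_ne_zero_iff _ hinj).mpr hc)
  obtain ⟨u, hu, ψ, hψ, hψΦ⟩ := exists_isPLinearMap_algebraMap_eq
    𝔭.primeCompl_le_nonZeroDivisors (hff.pow e) hΦ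
  have hψc : ψ c = u := hinj (by rw [hψΦ, hΦc, mul_one])
  exact ⟨e, ψ, hψ, hψc ▸ hu⟩

namespace PurelyFRegularAlong

variable {R : Type*} [CommRing R] {I : Ideal R}

theorem stronglyFRegular (h : PurelyFRegularAlong p I)
    (hI : ∀ c : R, c ≠ 0 → ∃ e, ∃ ψ : R →+ R, IsPLinearMap p e ψ ∧ ψ c ∉ I) :
    StronglyFRegular p R := by
  intro c hc
  obtain ⟨e₁, ψ, hψ, hψc⟩ := hI c hc
  obtain ⟨e₂, he₂, φ, hφ, -, hφc⟩ := h (ψ c) hψc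
  exact ⟨e₂ + e₁, le_add_right he₂, φ.comp ψ, hφ.comp hψ, hφc⟩

theorem stronglyFRegular_quotient (h : PurelyFRegularAlong p I) : StronglyFRegular p (R ⧸ I) := by
  intro c hc
  obtain ⟨c, rfl⟩ := Ideal.Quotient.mk_surjective c
  obtain ⟨e, he, φ, hφ, hφI, hφc⟩ := h c (mt Ideal.Quotient.eq_zero_iff_mem.mpr hc)
  obtain ⟨φ', hφ', hφ'mk⟩ := hφ.exists_quotient hφI
  exact ⟨e, he, φ', hφ', by rw [hφ'mk, hφc, map_one]⟩

end PurelyFRegularAlong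

/-- If `(R, 𝔭)` is purely F-regular for a height-one prime `𝔭` of a noetherian F-finite
normal domain, then both `R` and `R/𝔭` are strongly F-regular. -/
theorem stronglyFRegular_of_purelyFRegular (p : ℕ) (hp : p.Prime)
    (R : Type*) [CommRing R] [IsDomain R] [IsNoetherianRing R] [IsIntegrallyClosed R]
    [CharP R p] (hff : FFinite p R)
    (𝔭 : Ideal R) (h𝔭 : IsHeightOnePrime 𝔭)
    (h : PurelyFRegularAlong p 𝔭) :
    StronglyFRegular p R ∧ StronglyFRegular p (R ⧸ 𝔭) := by
  obtain ⟨h𝔭prime, -, h𝔭min⟩ := h𝔭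
  exact ⟨h.stronglyFRegular fun c hc => exists_isPLinearMap_apply_notMem hp hff 𝔭 h𝔭min hc,
    h.stronglyFRegular_quotient⟩
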